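/- arXiv:0710.5877 — 2 statements merged into one kernel-verified Lean document; each statement's English description precedes it below -/
import Mathlib

section
/- In the rational double affine Hecke–Clifford algebra H^c_{A_{n−1}}(u), for every integer l ≥ 0 and all i ≠ j: [y_j^l, x_i] = u·(Σ_{a=0}^{l−1} y_j^a y_i^{l−1−a})·(1 + c_j c_i)·s_{ij}, and [y_i^l, x_i] = −u·Σ_{k≠i} (Σ_{a=0}^{l−1} y_i^a y_k^{l−1−a})·(1 + c_k c_i)·s_{ki}. -/
noncomputable section

abbrev SignFn (n : ℕ) := Fin n → ℤˣ

/-- The permutation action on sign functions. -/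
def permAut (n : ℕ) : Equiv.Perm (Fin n) →* MulAut (SignFn n) where
  toFun σ :=
    { toFun := fun f => f ∘ σ.symm
      invFun := fun f => f ∘ σ
      left_inv := fun f => by ext k; simp
      right_inv := fun f => by ext k; simp
      map_mul' := fun f g => rfl }
  map_one' := by ext f k; simp; rfl
  map_mul' := fun σ τ => by
    ext f k
    show (f ((σ * τ).symm k) : ℤ) = f (τ.symm (σ.symm k))
    rw [Equiv.Perm.mul_def, Equiv.symm_trans_apply]

/-- The hyperoctahedral group `W_{B_n}` of signed permutations, as a semidirect product. -/
abbrev WB (n : ℕ) := SignFn n ⋊[permAut n] Equiv.Perm (Fin n)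

/-- the transposition `s_{ij}` in `W_{B_n}`. -/
def sB {n : ℕ} (i j : Fin n) : WB n := ⟨1, Equiv.swap i j⟩

/-- the transposition with sign changes `s̄_{ij}` in `W_{B_n}`. -/
def sbarB {n : ℕ} (i j : Fin n) : WB n :=
  ⟨fun k => if k = i ∨ k = j then -1 else 1, Equiv.swap i j⟩

/-- the sign change `τ_i` at `i` in `W_{B_n}`. -/
def tauB {n : ℕ} (i : Fin n) : WB n := ⟨fun k => if k = i then -1 else 1, 1⟩

/-- The signed-permutation action of `w ∈ W_{B_n}` on a basis vector `e_i`: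
`w(e_i) = (sign) • e_{(index)}`; we record the pair (sign, index). -/
def actB {n : ℕ} (w : WB n) (i : Fin n) : ℂ × Fin n :=
  (((w.left (w.right i) : ℤ) : ℂ), w.right i)

/-- `W_{D_n}` as the subgroup of even signed permutations inside `W_{B_n}`. -/
def WDsub (n : ℕ) : Subgroup (WB n) where
  carrier := {w | ∏ k, w.left k = 1}
  one_mem' := by simp
  mul_mem' := by
    intro a b ha hb
    simp only [Set.mem_setOf_eq] at *
    have h1 : (a * b).left = a.left * (permAut n a.right) b.left := rfl
    rw [h1]
    rw [show (∏ k, (a.left * (permAut n a.right) b.left) k) = (∏ k, a.left k) * ∏ k, (permAut n a.right) b.left k from Finset.prod_mul_distrib, ha, one_mul]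
    calc ∏ k, (permAut n a.right) b.left k = ∏ k, b.left (a.right.symm k) := rfl
      _ = ∏ k, b.left k := Equiv.prod_comp a.right.symm b.left
      _ = 1 := hb
  inv_mem' := by
    intro a ha
    simp only [Set.mem_setOf_eq] at *
    have h1 : (a⁻¹).left = (permAut n a.right⁻¹) a.left⁻¹ := rfl
    rw [h1]
    calc ∏ k, (permAut n a.right⁻¹) a.left⁻¹ k
        = ∏ k, a.left⁻¹ ((a.right⁻¹).symm k) := rfl
      _ = ∏ k, (a.left k)⁻¹ := Equiv.prod_comp _ _
      _ = (∏ k, a.left k)⁻¹ := by rw [← Finset.prod_inv_distrib]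
      _ = 1 := by rw [ha]; simp

lemma sB_mem {n : ℕ} (i j : Fin n) : sB i j ∈ WDsub n := by
  simp [WDsub, sB]

lemma sbarB_mem {n : ℕ} {i j : Fin n} (h : i ≠ j) : sbarB i j ∈ WDsub n := by
  show ∏ k, (if k = i ∨ k = j then (-1 : ℤˣ) else 1) = 1
  have step : ∀ k, (if k = i ∨ k = j then (-1 : ℤˣ) else 1)
      = (if k = i then -1 else 1) * (if k = j then -1 else 1) := by
    intro k
    by_cases h1 : k = i <;> by_cases h2 : k = j <;> simp_all
  simp_rw [step, Finset.prod_mul_distrib, Finset.prod_ite_eq', Finset.mem_univ, if_true]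
  norm_num

/-- the transposition `s_{ij}` as an element of `W_{D_n}`. -/
def sD {n : ℕ} (i j : Fin n) : WDsub n := ⟨sB i j, sB_mem i j⟩

/-- the transposition with sign changes `s̄_{ij}` as an element of `W_{D_n}` (junk value `1`
when `i = j`). -/
def sbarD {n : ℕ} (i j : Fin n) : WDsub n :=
  if h : i = j then 1 else ⟨sbarB i j, sbarB_mem h⟩

/-- The signed-permutation action for `W_{D_n}`. -/
def actD {n : ℕ} (w : WDsub n) (i : Fin n) : ℂ × Fin n := actB w.1 i

/-- The (trivially signed) permutation action of `S_n`. -/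
def actA (n : ℕ) (σ : Equiv.Perm (Fin n)) (i : Fin n) : ℂ × Fin n := (1, σ i)

/-- Generators of a rational double affine Hecke-Clifford algebra:
`x_i`, `y_i`, Clifford generators `c_i`, and group elements `w ∈ W`. -/
inductive HGen (n : ℕ) (G : Type) : Type
  | x : Fin n → HGen n G
  | y : Fin n → HGen n G
  | c : Fin n → HGen n G
  | g : G → HGen n G

/-- The free algebra on the generators. -/
abbrev HF (n : ℕ) (G : Type) := FreeAlgebra ℂ (HGen n G)

def hX {n : ℕ} {G : Type} (i : Fin n) : HF n G := FreeAlgebra.ι ℂ (HGen.x i)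
def hY {n : ℕ} {G : Type} (i : Fin n) : HF n G := FreeAlgebra.ι ℂ (HGen.y i)
def hC {n : ℕ} {G : Type} (i : Fin n) : HF n G := FreeAlgebra.ι ℂ (HGen.c i)
def hG {n : ℕ} {G : Type} (w : G) : HF n G := FreeAlgebra.ι ℂ (HGen.g w)

/-- The defining relations of a rational double affine Hecke-Clifford algebra, where
`act w i = (sign, index)` records the (signed) permutation action `w(e_i) = sign • e_index`
of the group `W` on the basis vectors, and `R j i` is the prescribed value of the
commutator `[y_j, x_i]`. -/
inductive HRel (n : ℕ) (G : Type) [Group G] (act : G → Fin n → ℂ × Fin n)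
    (R : Fin n → Fin n → HF n G) : HF n G → HF n G → Prop
  | cc (i : Fin n) : HRel n G act R (hC i * hC i) 1
  | canti {i j : Fin n} (h : i ≠ j) : HRel n G act R (hC i * hC j) (-(hC j * hC i))
  | xx (i j : Fin n) : HRel n G act R (hX i * hX j) (hX j * hX i)
  | yy (i j : Fin n) : HRel n G act R (hY i * hY j) (hY j * hY i)
  | yc (i j : Fin n) : HRel n G act R (hY i * hC j) (hC j * hY i)
  | xcs (i : Fin n) : HRel n G act R (hX i * hC i) (-(hC i * hX i))
  | xc {i j : Fin n} (h : i ≠ j) : HRel n G act R (hX i * hC j) (hC j * hX i)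
  | gone : HRel n G act R (hG (1 : G)) 1
  | gmul (w w' : G) : HRel n G act R (hG w * hG w') (hG (w * w'))
  | gx (w : G) (i : Fin n) :
      HRel n G act R (hG w * hX i) ((act w i).1 • (hX (act w i).2 * hG w))
  | gy (w : G) (i : Fin n) :
      HRel n G act R (hG w * hY i) ((act w i).1 • (hY (act w i).2 * hG w))
  | gc (w : G) (i : Fin n) :
      HRel n G act R (hG w * hC i) ((act w i).1 • (hC (act w i).2 * hG w))
  | yx (j i : Fin n) : HRel n G act R (hY j * hX i) (hX i * hY j + R j i)

/-- A rational double affine Hecke-Clifford algebra, presented by generators and relations. -/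
abbrev DaHCa (n : ℕ) (G : Type) [Group G] (act : G → Fin n → ℂ × Fin n)
    (R : Fin n → Fin n → HF n G) := RingQuot (HRel n G act R)

variable {n : ℕ} {G : Type} [Group G] {act : G → Fin n → ℂ × Fin n}
  {R : Fin n → Fin n → HF n G}

def dX (act : G → Fin n → ℂ × Fin n) (R : Fin n → Fin n → HF n G) (i : Fin n) :
    DaHCa n G act R := RingQuot.mkAlgHom ℂ (HRel n G act R) (hX i)
def dY (act : G → Fin n → ℂ × Fin n) (R : Fin n → Fin n → HF n G) (i : Fin n) :
    DaHCa n G act R := RingQuot.mkAlgHom ℂ (HRel n G act R) (hY i)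
def dC (act : G → Fin n → ℂ × Fin n) (R : Fin n → Fin n → HF n G) (i : Fin n) :
    DaHCa n G act R := RingQuot.mkAlgHom ℂ (HRel n G act R) (hC i)
def dG (act : G → Fin n → ℂ × Fin n) (R : Fin n → Fin n → HF n G) (w : G) :
    DaHCa n G act R := RingQuot.mkAlgHom ℂ (HRel n G act R) (hG w)

/-- The right-hand side of the commutation relations `[y_j, x_i]` in the rational
DaHCa of type `A_{n-1}`:  `[y_j,x_i] = u(1+c_j c_i)s_{ji}` for `i ≠ j` and
`[y_i,x_i] = -u Σ_{k≠i} (1+c_k c_i)s_{ki}`. -/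
def RA (n : ℕ) (u : ℂ) (j i : Fin n) : HF n (Equiv.Perm (Fin n)) :=
  if j = i then
    -(u • ∑ k ∈ Finset.univ.erase i, (1 + hC k * hC i) * hG (Equiv.swap k i))
  else
    u • ((1 + hC j * hC i) * hG (Equiv.swap j i))

/-- The rational double affine Hecke-Clifford algebra of type `A_{n-1}`. -/
abbrev HCA (n : ℕ) (u : ℂ) := DaHCa n (Equiv.Perm (Fin n)) (actA n) (RA n u)

def xA {n : ℕ} {u : ℂ} (i : Fin n) : HCA n u := dX (actA n) (RA n u) i
def yA {n : ℕ} {u : ℂ} (i : Fin n) : HCA n u := dY (actA n) (RA n u) i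
def cA {n : ℕ} {u : ℂ} (i : Fin n) : HCA n u := dC (actA n) (RA n u) i
def gA {n : ℕ} {u : ℂ} (w : Equiv.Perm (Fin n)) : HCA n u := dG (actA n) (RA n u) w

/-! `[y^l, x] = Σ_{a<l} y^a [y, x] y^{l-1-a}` (the Leibniz rule for `ad y`). Each summand
`T = (1 + c c') w` of `[y_m, x_i]` satisfies `T y_m = y_{w(m)} T`, because the `y`'s commute
with the `c`'s; pushing `T` to the right end turns `y_m^a T y_m^{l-1-a}` into
`y_m^a y_{w(m)}^{l-1-a} T`. -/

section RingIdentities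

open Finset

variable {A : Type*} [Ring A]

theorem pow_mul_sub_mul_pow_eq_sum (y x : A) (l : ℕ) :
    y ^ l * x - x * y ^ l = ∑ a ∈ range l, y ^ a * (y * x - x * y) * y ^ (l - 1 - a) := by
  induction l with
  | zero => simp
  | succ l ih =>
    have hstep : y ^ (l + 1) * x - x * y ^ (l + 1)
        = y * (y ^ l * x - x * y ^ l) + (y * x - x * y) * y ^ l := by
      rw [pow_succ']
      noncomm_ring
    rw [hstep, ih, sum_range_succ', mul_sum]
    simp only [pow_zero, one_mul, Nat.add_sub_cancel, Nat.sub_zero]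
    congr 1
    refine sum_congr rfl fun a _ => ?_
    rw [show l - (a + 1) = l - 1 - a by omega, pow_succ', mul_assoc, mul_assoc, mul_assoc]

theorem mul_pow_sub_pow_mul_eq_sum (x y : A) (l : ℕ) :
    x * y ^ l - y ^ l * x = ∑ a ∈ range l, y ^ a * (x * y - y * x) * y ^ (l - 1 - a) := by
  rw [← neg_sub, pow_mul_sub_mul_pow_eq_sum, ← sum_neg_distrib]
  simp only [← neg_sub (x * y), mul_neg, neg_mul, neg_neg]

theorem SemiconjBy.sum_pow_mul_mul_pow {r y z : A} (h : SemiconjBy r y z) (l : ℕ) :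
    ∑ a ∈ range l, y ^ a * r * y ^ (l - 1 - a) = (∑ a ∈ range l, y ^ a * z ^ (l - 1 - a)) * r := by
  rw [sum_mul]
  refine sum_congr rfl fun a _ => ?_
  rw [mul_assoc, (h.pow_right _).eq, mul_assoc]

end RingIdentities

section TypeA

open Finset

variable {u : ℂ}

theorem yA_mul_xA_sub (j i : Fin n) :
    (yA j : HCA n u) * xA i - xA i * yA j
      = RingQuot.mkAlgHom ℂ (HRel n _ (actA n) (RA n u)) (RA n u j i) := by
  have h := RingQuot.mkAlgHom_rel ℂ (HRel.yx (act := actA n) (R := RA n u) j i)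
  simp only [map_mul, map_add] at h
  exact sub_eq_of_eq_add' h

theorem yA_mul_xA_sub_of_ne {j i : Fin n} (h : j ≠ i) :
    (yA j : HCA n u) * xA i - xA i * yA j = u • ((1 + cA j * cA i) * gA (Equiv.swap j i)) := by
  rw [yA_mul_xA_sub]
  simp only [RA, if_neg h, map_smul, map_mul, map_add, map_one]
  rfl

-- Stated with the commutator reversed, so that no `Neg` of `RingQuot` (opaque to `rw` and `simp`)
-- has to be manipulated.
theorem xA_mul_yA_sub_self (i : Fin n) :
    (xA i : HCA n u) * yA i - yA i * xA i
      = u • ∑ k ∈ univ.erase i, (1 + cA k * cA i) * gA (Equiv.swap k i) := by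
  rw [← neg_sub, yA_mul_xA_sub]
  simp only [RA, if_true, map_neg, neg_neg, map_smul, map_sum, map_mul, map_add, map_one]
  rfl

theorem semiconjBy_gA_yA (w : Equiv.Perm (Fin n)) (i : Fin n) :
    SemiconjBy (gA w : HCA n u) (yA i) (yA (w i)) := by
  have h := RingQuot.mkAlgHom_rel ℂ (HRel.gy (act := actA n) (R := RA n u) w i)
  simp only [map_mul, actA, one_smul] at h
  exact h

theorem commute_yA_cA (i j : Fin n) : Commute (yA i : HCA n u) (cA j) := by
  have h := RingQuot.mkAlgHom_rel ℂ (HRel.yc (act := actA n) (R := RA n u) i j)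
  simp only [map_mul] at h
  exact h

theorem semiconjBy_one_add_cA_mul_cA_mul_gA_yA (a b m : Fin n) (w : Equiv.Perm (Fin n)) :
    SemiconjBy ((1 + cA a * cA b) * gA w : HCA n u) (yA m) (yA (w m)) := by
  have hc : Commute (1 + cA a * cA b : HCA n u) (yA (w m)) :=
    (Commute.one_left _).add_left ((commute_yA_cA _ a).symm.mul_left (commute_yA_cA _ b).symm)
  exact SemiconjBy.mul_left hc (semiconjBy_gA_yA w m)

theorem yA_pow_mul_xA_sub_of_ne (l : ℕ) {i j : Fin n} (hij : i ≠ j) :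
    (yA j : HCA n u) ^ l * xA i - xA i * yA j ^ l
      = u • ((∑ a ∈ range l, yA j ^ a * yA i ^ (l - 1 - a))
          * ((1 + cA j * cA i) * gA (Equiv.swap i j))) := by
  have hs := semiconjBy_one_add_cA_mul_cA_mul_gA_yA (u := u) j i j (Equiv.swap i j)
  rw [Equiv.swap_apply_right] at hs
  rw [pow_mul_sub_mul_pow_eq_sum, yA_mul_xA_sub_of_ne hij.symm, Equiv.swap_comm,
    ← hs.sum_pow_mul_mul_pow, smul_sum]
  simp only [mul_smul_comm, smul_mul_assoc]

theorem yA_pow_mul_xA_sub_self (l : ℕ) (i : Fin n) :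
    (yA i : HCA n u) ^ l * xA i - xA i * yA i ^ l
      = -(u • ∑ k ∈ univ.erase i,
          (∑ a ∈ range l, yA i ^ a * yA k ^ (l - 1 - a))
            * ((1 + cA k * cA i) * gA (Equiv.swap k i))) := by
  have hs (k : Fin n) := semiconjBy_one_add_cA_mul_cA_mul_gA_yA (u := u) k i i (Equiv.swap k i)
  simp only [Equiv.swap_apply_right] at hs
  have hcomm : (xA i : HCA n u) * yA i ^ l - yA i ^ l * xA i
      = u • ∑ k ∈ univ.erase i, (∑ a ∈ range l, yA i ^ a * yA k ^ (l - 1 - a))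
          * ((1 + cA k * cA i) * gA (Equiv.swap k i)) := by
    simp only [mul_pow_sub_pow_mul_eq_sum, xA_mul_yA_sub_self, mul_smul_comm, smul_mul_assoc,
      mul_sum, sum_mul, ← (hs _).sum_pow_mul_mul_pow]
    rw [sum_comm, smul_sum]
  rw [← neg_sub, hcomm]

end TypeA

/-- **Commutators of powers of `y` with `x`** (Khongsap-Wang, Lemma 3.4).  In the rational
double affine Hecke-Clifford algebra `H^c_{A_{n-1}}(u)`, for `l ≥ 0` and `i ≠ j`,
`[y_j^l, x_i] = u((y_j^l-y_i^l)/(y_j-y_i))(1+c_j c_i)s_{ij}` and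
`[y_i^l, x_i] = -u Σ_{k≠i} ((y_i^l-y_k^l)/(y_i-y_k))(1+c_k c_i)s_{ki}`, the divided
differences being the sums `Σ_{a=0}^{l-1} y_j^a y_i^{l-1-a}`. -/
theorem daHCaA_comm_ypow_x (n : ℕ) (u : ℂ) (l : ℕ) (i j : Fin n) (hij : i ≠ j) :
    ((yA j : HCA n u) ^ l * xA i - xA i * yA j ^ l
      = u • ((∑ a ∈ Finset.range l, yA j ^ a * yA i ^ (l - 1 - a))
          * ((1 + cA j * cA i) * gA (Equiv.swap i j)))) ∧
    ((yA i : HCA n u) ^ l * xA i - xA i * yA i ^ l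
      = -(u • ∑ k ∈ Finset.univ.erase i,
          (∑ a ∈ Finset.range l, yA i ^ a * yA k ^ (l - 1 - a))
            * ((1 + cA k * cA i) * gA (Equiv.swap k i)))) :=
  ⟨yA_pow_mul_xA_sub_of_ne l hij, yA_pow_mul_xA_sub_self l i⟩
end
end

section
/- In the rational double affine Hecke–Clifford algebra H^c_{B_n}(u,v), for every integer l ≥ 0 and all i ≠ j, setting P = Σ_{a=0}^{l−1} y_j^a y_i^{l−1−a} and Q = Σ_{a=0}^{l−1} (−1)^{l−1−a} y_j^a y_i^{l−1−a}: [y_j^l, x_i] = u·P·(1 + c_j c_i)·s_{ij} − u·Q·(1 − c_j c_i)·s̄_{ij}; and setting, for each k ≠ i, P_k = Σ_{a=0}^{l−1} y_i^a y_k^{l−1−a} and Q_k = Σ_{a=0}^{l−1} (−1)^{l−1−a} y_i^a y_k^{l−1−a}: [y_i^l, x_i] = −u·Σ_{k≠i} P_k·(1 + c_k c_i)·s_{ki} − u·Σ_{k≠i} Q_k·(1 − c_k c_i)·s̄_{ki} − √2·v·R·τ_i, where R = y_i^{l−1} if l is odd and R = 0 if l is even. -/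
noncomputable section

variable {n : ℕ} {G : Type} [Group G] {act : G → Fin n → ℂ × Fin n}
  {R : Fin n → Fin n → HF n G}

/-- The right-hand side of the commutation relations `[y_j, x_i]` in the rational
DaHCa of type `B_n`. -/
def RB (n : ℕ) (u v : ℂ) (j i : Fin n) : HF n (WB n) :=
  if j = i then
    -(u • ∑ k ∈ Finset.univ.erase i,
        ((1 + hC k * hC i) * hG (sB k i) + (1 - hC k * hC i) * hG (sbarB k i)))
      - ((Real.sqrt 2 : ℂ) * v) • hG (tauB i)
  else
    u • ((1 + hC j * hC i) * hG (sB i j) - (1 - hC j * hC i) * hG (sbarB i j))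

/-- The rational double affine Hecke-Clifford algebra of type `B_n`. -/
abbrev HCB (n : ℕ) (u v : ℂ) := DaHCa n (WB n) actB (RB n u v)

def xB {n : ℕ} {u v : ℂ} (i : Fin n) : HCB n u v := dX actB (RB n u v) i
def yB {n : ℕ} {u v : ℂ} (i : Fin n) : HCB n u v := dY actB (RB n u v) i
def cB {n : ℕ} {u v : ℂ} (i : Fin n) : HCB n u v := dC actB (RB n u v) i
def gB {n : ℕ} {u v : ℂ} (w : WB n) : HCB n u v := dG actB (RB n u v) w

/-!
Left and right multiplication by `y` are commuting operators `L`, `R`, so the factorisation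
`L ^ l - R ^ l = (∑ a < l, L ^ a R ^ (l - 1 - a)) (L - R)` gives
`[y ^ l, x] = ∑ a < l, y ^ a [y, x] y ^ (l - 1 - a)`.
Every summand of `[y_j, x_i]` is a Clifford factor commuting with all `y_m`, times a group
element `w` with `w y_m = ± y_{w(m)} w`; pushing `y_j ^ (l - 1 - a)` through it to the left
produces the sums `P`, `Q`, where the sign `-1` comes from `s̄` and `τ`. For `τ_i` the sum
collapses to `(∑ a < l, (-1) ^ a) y_i ^ (l - 1)`, which is `y_i ^ (l - 1)` or `0` by parity.
-/

section PowSandwich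

variable (R : Type*) {A : Type*} [CommSemiring R]

def powSandwich [Semiring A] [Algebra R A] (y : A) (l : ℕ) : Module.End R A :=
  ∑ a ∈ Finset.range l, LinearMap.mulLeft R y ^ a * LinearMap.mulRight R y ^ (l - 1 - a)

lemma pow_mul_sub_mul_pow [Ring A] [Algebra R A] (y x : A) (l : ℕ) :
    y ^ l * x - x * y ^ l = powSandwich R y l (y * x - x * y) := by
  have h := congrArg (· x) ((LinearMap.commute_mulLeft_right (R := R) y y).geom_sum₂_mul l)
  simpa [powSandwich] using h.symm

variable {R}

lemma powSandwich_apply [Semiring A] [Algebra R A] (y x : A) (l : ℕ) :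
    powSandwich R y l x = ∑ a ∈ Finset.range l, y ^ a * x * y ^ (l - 1 - a) := by
  simp [powSandwich, LinearMap.sum_apply, mul_assoc]

lemma mul_pow_eq_smul_of_mul_eq_smul [Semiring A] [Algebra R A] {T y y' : A} {ε : R}
    (h : T * y = ε • (y' * T)) (b : ℕ) : T * y ^ b = ε ^ b • (y' ^ b * T) := by
  induction b with
  | zero => simp
  | succ b ih =>
    rw [pow_succ, ← mul_assoc, ih, smul_mul_assoc, mul_assoc, h, mul_smul_comm, smul_smul,
      ← mul_assoc, ← pow_succ, ← pow_succ]

lemma powSandwich_apply_of_mul_eq_smul [Semiring A] [Algebra R A] {T y y' : A} {ε : R}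
    (h : T * y = ε • (y' * T)) (l : ℕ) :
    powSandwich R y l T
      = (∑ a ∈ Finset.range l, ε ^ (l - 1 - a) • (y ^ a * y' ^ (l - 1 - a))) * T := by
  rw [powSandwich_apply, Finset.sum_mul]
  refine Finset.sum_congr rfl fun a _ => ?_
  rw [mul_assoc, mul_pow_eq_smul_of_mul_eq_smul h, smul_mul_assoc, mul_smul_comm, mul_assoc]

end PowSandwich

lemma sum_neg_one_pow_smul_pow_mul_pow {R A : Type*} [Ring R] [Ring A] [Module R A]
    (y : A) (l : ℕ) :
    ∑ a ∈ Finset.range l, (-1 : R) ^ (l - 1 - a) • (y ^ a * y ^ (l - 1 - a))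
      = if Odd l then y ^ (l - 1) else 0 := by
  have hpow : ∀ a ∈ Finset.range l, y ^ a * y ^ (l - 1 - a) = y ^ (l - 1) := fun a ha => by
    rw [← pow_add]
    congr 1
    have := Finset.mem_range.mp ha
    omega
  rw [Finset.sum_congr rfl fun a ha => by rw [hpow a ha], ← Finset.sum_smul,
    Finset.sum_range_reflect, neg_one_geom_sum]
  split_ifs with heven hodd hodd
  · exact absurd hodd (Nat.not_odd_iff_even.mpr heven)
  · exact zero_smul R _
  · exact one_smul R _
  · exact absurd (Nat.not_even_iff_odd.mp heven) hodd

section HCB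

variable {n : ℕ} {u v : ℂ}

lemma mkAlgHom_eq_of_HRel {a b : HF n (WB n)} (h : HRel n (WB n) actB (RB n u v) a b) :
    RingQuot.mkAlgHom ℂ (HRel n (WB n) actB (RB n u v)) a
      = RingQuot.mkAlgHom ℂ (HRel n (WB n) actB (RB n u v)) b :=
  RingQuot.mkAlgHom_rel ℂ h

lemma commute_yB_cB (i j : Fin n) : Commute (yB i : HCB n u v) (cB j) := by
  have h := mkAlgHom_eq_of_HRel (u := u) (v := v) (HRel.yc i j)
  rwa [map_mul, map_mul] at h

lemma gB_mul_yB (w : WB n) (m : Fin n) :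
    (gB w : HCB n u v) * yB m = (actB w m).1 • (yB (actB w m).2 * gB w) := by
  simpa only [yB, gB, dY, dG, map_mul, map_smul] using
    mkAlgHom_eq_of_HRel (u := u) (v := v) (HRel.gy w m)

lemma yB_mul_xB_sub (j i : Fin n) :
    (yB j : HCB n u v) * xB i - xB i * yB j
      = RingQuot.mkAlgHom ℂ (HRel n (WB n) actB (RB n u v)) (RB n u v j i) := by
  rw [sub_eq_iff_eq_add']
  simpa only [yB, xB, dY, dX, map_mul, map_add] using
    mkAlgHom_eq_of_HRel (u := u) (v := v) (HRel.yx j i)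

lemma yB_mul_xB_sub_of_ne {i j : Fin n} (hij : i ≠ j) :
    (yB j : HCB n u v) * xB i - xB i * yB j
      = u • ((1 + cB j * cB i) * gB (sB i j)) - u • ((1 - cB j * cB i) * gB (sbarB i j)) := by
  rw [yB_mul_xB_sub, RB, if_neg hij.symm]
  simp only [cB, gB, dC, dG, map_smul, map_sub, map_mul, map_add, map_one,
    smul_sub]

lemma yB_mul_xB_sub_self (i : Fin n) :
    (yB i : HCB n u v) * xB i - xB i * yB i
      = -(u • ∑ k ∈ Finset.univ.erase i,
            ((1 + cB k * cB i) * gB (sB k i) + (1 - cB k * cB i) * gB (sbarB k i)))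
        - ((Real.sqrt 2 : ℂ) * v) • gB (tauB i) := by
  rw [yB_mul_xB_sub, RB, if_pos rfl]
  simp only [cB, gB, dC, dG, map_smul, map_sub, map_mul, map_add, map_one,
    map_neg, map_sum]

lemma actB_sB_right (i j : Fin n) : actB (sB i j) j = (1, i) := by
  simp [actB, sB]

lemma actB_sbarB_right {i j : Fin n} (h : i ≠ j) : actB (sbarB i j) j = (-1, i) := by
  simp [actB, sbarB, h]

lemma actB_tauB (i : Fin n) : actB (tauB i) i = (-1, i) := by
  simp [actB, tauB]

lemma commute_one_add_cB_mul_cB_yB (p q m : Fin n) :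
    Commute (1 + cB p * cB q : HCB n u v) (yB m) :=
  (Commute.one_left _).add_left ((commute_yB_cB m p).mul_right (commute_yB_cB m q)).symm

lemma commute_one_sub_cB_mul_cB_yB (p q m : Fin n) :
    Commute (1 - cB p * cB q : HCB n u v) (yB m) :=
  (Commute.one_left _).sub_left ((commute_yB_cB m p).mul_right (commute_yB_cB m q)).symm

lemma mul_gB_mul_yB {d : HCB n u v} {w : WB n} {m m' : Fin n} {ε : ℂ}
    (hw : actB w m = (ε, m')) (hd : Commute d (yB m')) :
    d * gB w * yB m = ε • (yB m' * (d * gB w)) := by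
  rw [mul_assoc, gB_mul_yB, hw, mul_smul_comm, ← mul_assoc, hd.eq, mul_assoc]

lemma powSandwich_yB_mul_gB_sB {d : HCB n u v} (hd : ∀ m, Commute d (yB m)) (l : ℕ)
    (p q : Fin n) :
    powSandwich ℂ (yB q) l (d * gB (sB p q))
      = (∑ a ∈ Finset.range l, yB q ^ a * yB p ^ (l - 1 - a)) * (d * gB (sB p q)) := by
  rw [powSandwich_apply_of_mul_eq_smul (mul_gB_mul_yB (actB_sB_right p q) (hd p))]
  simp only [one_pow, one_smul]

lemma powSandwich_yB_mul_gB_sbarB {d : HCB n u v} (hd : ∀ m, Commute d (yB m)) (l : ℕ)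
    {p q : Fin n} (hpq : p ≠ q) :
    powSandwich ℂ (yB q) l (d * gB (sbarB p q))
      = (∑ a ∈ Finset.range l, (-1 : ℂ) ^ (l - 1 - a) • (yB q ^ a * yB p ^ (l - 1 - a)))
          * (d * gB (sbarB p q)) :=
  powSandwich_apply_of_mul_eq_smul (mul_gB_mul_yB (actB_sbarB_right hpq) (hd p)) l

lemma powSandwich_yB_tauB (l : ℕ) (i : Fin n) :
    powSandwich ℂ (yB i) l (gB (tauB i) : HCB n u v)
      = (if Odd l then yB i ^ (l - 1) else 0) * gB (tauB i) := by
  have h := mul_gB_mul_yB (d := 1) (actB_tauB i) (Commute.one_left (yB i : HCB n u v))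
  rw [one_mul] at h
  rw [powSandwich_apply_of_mul_eq_smul h, sum_neg_one_pow_smul_pow_mul_pow]

end HCB

theorem daHCaB_comm_ypow_x_general (n : ℕ) (u v : ℂ) (l : ℕ) (i j : Fin n)
    (hij : i ≠ j) (P Q : HCB n u v) (Pk Qk : Fin n → HCB n u v)
    (hP : P = ∑ a ∈ Finset.range l, yB j ^ a * yB i ^ (l - 1 - a))
    (hQ : Q = ∑ a ∈ Finset.range l, ((-1 : ℂ)) ^ (l - 1 - a) • (yB j ^ a * yB i ^ (l - 1 - a)))
    (hPk : ∀ k, Pk k = ∑ a ∈ Finset.range l, yB i ^ a * yB k ^ (l - 1 - a))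
    (hQk : ∀ k, Qk k
      = ∑ a ∈ Finset.range l, ((-1 : ℂ)) ^ (l - 1 - a) • (yB i ^ a * yB k ^ (l - 1 - a))) :
    ((yB j : HCB n u v) ^ l * xB i - xB i * yB j ^ l
      = u • (P * ((1 + cB j * cB i) * gB (sB i j)))
        - u • (Q * ((1 - cB j * cB i) * gB (sbarB i j)))) ∧
    ((yB i : HCB n u v) ^ l * xB i - xB i * yB i ^ l
      = -(u • ∑ k ∈ Finset.univ.erase i, Pk k * ((1 + cB k * cB i) * gB (sB k i)))
        - u • (∑ k ∈ Finset.univ.erase i, Qk k * ((1 - cB k * cB i) * gB (sbarB k i)))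
        - ((Real.sqrt 2 : ℂ) * v) • ((if Odd l then yB i ^ (l - 1) else 0) * gB (tauB i))) := by
  constructor
  · rw [pow_mul_sub_mul_pow ℂ, yB_mul_xB_sub_of_ne hij, map_sub, map_smul, map_smul,
      powSandwich_yB_mul_gB_sB (commute_one_add_cB_mul_cB_yB j i),
      powSandwich_yB_mul_gB_sbarB (commute_one_sub_cB_mul_cB_yB j i) l hij, hP, hQ]
  · have hsummand : ∀ k ∈ Finset.univ.erase i,
        powSandwich ℂ (yB i) l
            ((1 + cB k * cB i) * gB (sB k i) + (1 - cB k * cB i) * gB (sbarB k i))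
          = Pk k * ((1 + cB k * cB i) * gB (sB k i))
            + Qk k * ((1 - cB k * cB i) * gB (sbarB k i)) := fun k hk => by
      rw [map_add, powSandwich_yB_mul_gB_sB (commute_one_add_cB_mul_cB_yB k i),
        powSandwich_yB_mul_gB_sbarB (commute_one_sub_cB_mul_cB_yB k i) l
          (Finset.ne_of_mem_erase hk), hPk, hQk]
    rw [pow_mul_sub_mul_pow ℂ, yB_mul_xB_sub_self, map_sub, map_neg, map_smul, map_smul,
      map_sum, Finset.sum_congr rfl hsummand, Finset.sum_add_distrib, smul_add, neg_add',
      powSandwich_yB_tauB]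

/-- **Commutators of powers of `y` with `x` in type `B_n`** (Khongsap-Wang, Lemma 4.5).
In `H^c_{B_n}(u,v)`, for `l ≥ 0` and `i ≠ j`, with
`P = Σ_{a<l} y_j^a y_i^{l-1-a}`, `Q = Σ_{a<l} (-1)^{l-1-a} y_j^a y_i^{l-1-a}`:
`[y_j^l,x_i] = u P (1+c_j c_i)s_{ij} - u Q (1-c_j c_i)s̄_{ij}`, and
`[y_i^l,x_i] = -u Σ_{k≠i} P_k (1+c_k c_i)s_{ki} - u Σ_{k≠i} Q_k (1-c_k c_i)s̄_{ki} - √2 v R τ_i`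
where `R = y_i^{l-1}` for `l` odd and `R = 0` for `l` even. -/
theorem daHCaB_comm_ypow_x (n : ℕ) (hn : 2 ≤ n) (u v : ℂ) (l : ℕ) (i j : Fin n)
    (hij : i ≠ j) (P Q : HCB n u v) (Pk Qk : Fin n → HCB n u v)
    (hP : P = ∑ a ∈ Finset.range l, yB j ^ a * yB i ^ (l - 1 - a))
    (hQ : Q = ∑ a ∈ Finset.range l, ((-1 : ℂ)) ^ (l - 1 - a) • (yB j ^ a * yB i ^ (l - 1 - a)))
    (hPk : ∀ k, Pk k = ∑ a ∈ Finset.range l, yB i ^ a * yB k ^ (l - 1 - a))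
    (hQk : ∀ k, Qk k
      = ∑ a ∈ Finset.range l, ((-1 : ℂ)) ^ (l - 1 - a) • (yB i ^ a * yB k ^ (l - 1 - a))) :
    ((yB j : HCB n u v) ^ l * xB i - xB i * yB j ^ l
      = u • (P * ((1 + cB j * cB i) * gB (sB i j)))
        - u • (Q * ((1 - cB j * cB i) * gB (sbarB i j)))) ∧
    ((yB i : HCB n u v) ^ l * xB i - xB i * yB i ^ l
      = -(u • ∑ k ∈ Finset.univ.erase i, Pk k * ((1 + cB k * cB i) * gB (sB k i)))
        - u • (∑ k ∈ Finset.univ.erase i, Qk k * ((1 - cB k * cB i) * gB (sbarB k i)))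
        - ((Real.sqrt 2 : ℂ) * v) • ((if Odd l then yB i ^ (l - 1) else 0) * gB (tauB i))) :=
  daHCaB_comm_ypow_x_general n u v l i j hij P Q Pk Qk hP hQ hPk hQk

end
end
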